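/- arXiv:0709.1570 — 2 statements merged into one kernel-verified Lean document; each statement's English description precedes it below -/
import Mathlib

section
/- If n has at least two prime divisors counted with multiplicity (i.e., n is neither 1 nor prime), then some coefficient of Ψ_n(x) equals 0. -/
/-!
If `p² ∣ n` then `Ψₙ(x) = Ψ_{n/p}(x ^ p)`, so the coefficient of `x` vanishes. If `n > 2` is
even, `Ψₙ` is antipalindromic (`Φₙ` is palindromic, `xⁿ - 1` antipalindromic) of even degree
`n - φ(n)`, so its middle coefficient vanishes.

If `n` is odd and squarefree, let `p` be its least prime factor and `n = m p`. Since
`Φ_{mp}(x) Φ_m(x) = Φ_m(x ^ p) ≡ 1 mod x ^ p`, induction on the prime factors gives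
`Φ_m ≡ (1 - x) ^ μ(m) mod x ^ q` for squarefree `m` with least prime factor `q > p`. Then
`Ψₙ(x) = Ψ_m(x ^ p) Φ_m(x)` is congruent modulo `x ^ (p + 1)` to `-(1 + x ^ p)(1 - x)` if
`μ(m) = 1` and to `-(1 - x ^ p)/(1 - x)` if `μ(m) = -1`; the coefficient of `x²`, resp. `x ^ p`,
is `0`.
-/

open Polynomial

/-- The reciprocal cyclotomic polynomial Ψₙ(x) = (xⁿ - 1)/Φₙ(x). -/
noncomputable def Psi (n : ℕ) : ℤ[X] := (X ^ n - 1) /ₘ cyclotomic n ℤ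

open scoped ArithmeticFunction.Moebius

section ModXPow

variable {R : Type*} [CommRing R] {k : ℕ} {f g : R[X]}

noncomputable abbrev modXPow (k : ℕ) : R[X] →+* R[X] ⧸ Ideal.span {(X : R[X]) ^ k} :=
  Ideal.Quotient.mk _

lemma modXPow_eq_iff : modXPow k f = modXPow k g ↔ X ^ k ∣ f - g := by
  rw [Ideal.Quotient.eq, Ideal.mem_span_singleton]

lemma coeff_eq_of_modXPow_eq (h : modXPow k f = modXPow k g) {j : ℕ} (hj : j < k) :
    f.coeff j = g.coeff j :=
  sub_eq_zero.1 <| by simpa using X_pow_dvd_iff.1 (modXPow_eq_iff.1 h) j hj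

lemma modXPow_X_pow_of_le {n : ℕ} (h : k ≤ n) : modXPow k (X ^ n : R[X]) = 0 :=
  Ideal.Quotient.eq_zero_iff_mem.2 <| Ideal.mem_span_singleton.2 (pow_dvd_pow X h)

lemma isUnit_modXPow_one_sub_X (k : ℕ) : IsUnit (modXPow k (1 - X : R[X])) := by
  rw [map_sub, map_one]
  exact IsNilpotent.isUnit_one_sub ⟨k, by rw [← map_pow, modXPow_X_pow_of_le le_rfl]⟩

lemma modXPow_one_sub_X_mul_geom_sum (k : ℕ) :
    modXPow k ((1 - X) * ∑ i ∈ Finset.range k, X ^ i : R[X]) = 1 := by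
  rw [mul_neg_geom_sum, map_sub, map_one, modXPow_X_pow_of_le le_rfl, sub_zero]

lemma modXPow_expand {l p : ℕ} (h : modXPow l f = modXPow l g) (hk : k ≤ p * l) :
    modXPow k (expand R p f) = modXPow k (expand R p g) := by
  rw [modXPow_eq_iff] at h ⊢
  have := map_dvd (expand R p) h
  rw [map_pow, expand_X, ← pow_mul, map_sub] at this
  exact (pow_dvd_pow X hk).trans this

lemma modXPow_expand_of_le {p : ℕ} (hk : k ≤ p) :
    modXPow k (expand R p f) = modXPow k (C (f.coeff 0)) := by
  have h : modXPow 1 f = modXPow 1 (C (f.coeff 0)) := by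
    rw [modXPow_eq_iff, pow_one]; exact X_dvd_sub_C
  simpa using modXPow_expand h (by omega : k ≤ p * 1)

lemma expand_X_pow_sub_one {R : Type*} [CommRing R] (p m : ℕ) :
    expand R p (X ^ m - 1) = X ^ (m * p) - 1 := by
  simp [← pow_mul, mul_comm]

end ModXPow

section Reverse

lemma reverse_X_pow_sub_one {R : Type*} [Ring R] [Nontrivial R] (n : ℕ) :
    (X ^ n - 1 : R[X]).reverse = -(X ^ n - 1) := by
  rw [reverse, ← C_1, natDegree_X_pow_sub_C, reflect_sub, reflect_monomial, reflect_C,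
    revAt_le le_rfl, Nat.sub_self, C_1, pow_zero, one_mul, neg_sub]

lemma reverse_prod {R ι : Type*} [CommSemiring R] [NoZeroDivisors R] (s : Finset ι)
    (f : ι → R[X]) : (∏ i ∈ s, f i).reverse = ∏ i ∈ s, (f i).reverse := by
  classical
  induction s using Finset.induction_on with
  | empty => simpa using reverse_C (1 : R)
  | insert a s ha ih => rw [Finset.prod_insert ha, Finset.prod_insert ha, reverse_mul_of_domain, ih]

lemma coeff_natDegree_div_two_eq_zero_of_reverse_eq_neg {R : Type*} [Ring R] [NoZeroDivisors R]
    [CharZero R] {f : R[X]} (h : f.reverse = -f) (he : Even f.natDegree) :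
    f.coeff (f.natDegree / 2) = 0 := by
  have hc := congrArg (coeff · (f.natDegree / 2)) h
  simp only [coeff_reverse, coeff_neg] at hc
  have hhalf : f.natDegree - f.natDegree / 2 = f.natDegree / 2 := by
    obtain ⟨r, hr⟩ := he
    omega
  rw [revAt_le (Nat.div_le_self _ 2), hhalf] at hc
  exact self_eq_neg.1 hc

end Reverse

section Cyclotomic

variable {R : Type*} [CommRing R] {k p m : ℕ}

lemma modXPow_cyclotomic_prime_mul_one_sub_X (hp : p.Prime) (hk : k ≤ p) :
    modXPow k (cyclotomic p R) * modXPow k (1 - X) = 1 := by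
  have := Fact.mk hp
  have h : cyclotomic p R * (1 - X) = 1 - X ^ p := by
    linear_combination -(cyclotomic_prime_mul_X_sub_one R p)
  rw [← map_mul, h, map_sub, map_one, modXPow_X_pow_of_le hk, sub_zero]

lemma modXPow_cyclotomic_mul_prime_mul (hp : p.Prime) (hpm : ¬p ∣ m) (hm : 1 < m)
    (hk : k ≤ p) : modXPow k (cyclotomic (m * p) R) * modXPow k (cyclotomic m R) = 1 := by
  rw [← map_mul, ← cyclotomic_expand_eq_cyclotomic_mul hp hpm, modXPow_expand_of_le hk,
    cyclotomic_coeff_zero R hm, map_one, map_one]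

theorem modXPow_cyclotomic_of_squarefree (hm : 1 < m) (hsf : Squarefree m)
    (hk : k ≤ m.minFac) :
    modXPow k (cyclotomic m R) = ↑((isUnit_modXPow_one_sub_X (R := R) k).unit ^ μ m) := by
  induction m using Nat.strong_induction_on generalizing k with
  | _ m ih =>
  have hp : m.minFac.Prime := Nat.minFac_prime hm.ne'
  have hmin : ∀ q, 2 ≤ q → q ∣ m → m.minFac ≤ q := fun _ => Nat.minFac_le_of_dvd
  obtain ⟨m', hm'⟩ : ∃ m', m = m' * m.minFac :=
    ⟨_, (Nat.div_mul_cancel (Nat.minFac_dvd m)).symm⟩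
  generalize m.minFac = p at hp hmin hk hm'
  subst hm'
  have hpm' : ¬p ∣ m' := hp.coprime_iff_not_dvd.1 (Nat.coprime_of_squarefree_mul hsf).symm
  have hμ : μ (m' * p) = -μ m' := by
    rw [ArithmeticFunction.isMultiplicative_moebius.map_mul_of_coprime
      (hp.coprime_iff_not_dvd.2 hpm').symm, ArithmeticFunction.moebius_apply_prime hp]
    ring
  obtain rfl | rfl | hm' : m' = 0 ∨ m' = 1 ∨ 1 < m' := by omega
  · simp at hm
  · rw [one_mul, ArithmeticFunction.moebius_apply_prime hp, zpow_neg_one]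
    exact Units.eq_inv_of_mul_eq_one_right (modXPow_cyclotomic_prime_mul_one_sub_X hp hk)
  · have hpp' : p ≤ m'.minFac :=
      hmin _ (Nat.minFac_prime hm'.ne').two_le ((Nat.minFac_dvd m').trans (dvd_mul_right m' p))
    have ih' := ih m' (by nlinarith [hp.one_lt]) hm' (hsf.squarefree_of_dvd (dvd_mul_right m' p))
      (hk.trans hpp')
    rw [hμ, zpow_neg]
    refine Units.eq_inv_of_mul_eq_one_right ?_
    rw [← ih']
    exact modXPow_cyclotomic_mul_prime_mul hp hpm' hm' hk

lemma modXPow_cyclotomic_of_moebius_eq_one (hm : 1 < m)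
    (hsf : Squarefree m) (hk : k ≤ m.minFac) (hμ : μ m = 1) :
    modXPow k (cyclotomic m R) = modXPow k (1 - X) := by
  rw [modXPow_cyclotomic_of_squarefree hm hsf hk, hμ, zpow_one, IsUnit.unit_spec]

lemma modXPow_cyclotomic_of_moebius_eq_neg_one (hm : 1 < m)
    (hsf : Squarefree m) (hk : k ≤ m.minFac) (hμ : μ m = -1) :
    modXPow k (cyclotomic m R) = modXPow k (∑ i ∈ Finset.range k, X ^ i) := by
  rw [modXPow_cyclotomic_of_squarefree hm hsf hk, hμ, zpow_neg_one, eq_comm]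
  refine Units.eq_inv_of_mul_eq_one_left ?_
  rw [IsUnit.unit_spec, ← map_mul, modXPow_one_sub_X_mul_geom_sum]

theorem reverse_cyclotomic [IsDomain R] {n : ℕ} (hn : 1 < n) :
    (cyclotomic n R).reverse = cyclotomic n R := by
  induction n using Nat.strong_induction_on with
  | _ n ih =>
  have hsplit : X ^ n - 1 = cyclotomic n R * ∏ d ∈ n.properDivisors, cyclotomic d R := by
    rw [← prod_cyclotomic_eq_X_pow_sub_one (by omega) R,
      ← Nat.cons_self_properDivisors (by omega), Finset.prod_cons]
  have h1 : 1 ∈ n.properDivisors := Nat.one_mem_properDivisors_iff_one_lt.2 hn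
  have hP : (∏ d ∈ n.properDivisors, cyclotomic d R).reverse =
      -∏ d ∈ n.properDivisors, cyclotomic d R := by
    rw [reverse_prod, ← Finset.mul_prod_erase _ _ h1,
      ← Finset.mul_prod_erase n.properDivisors (cyclotomic · R) h1,
      cyclotomic_one, ← pow_one (X : R[X]), reverse_X_pow_sub_one 1, neg_mul]
    congr 2
    refine Finset.prod_congr rfl fun d hd => ?_
    obtain ⟨hd1, hd⟩ := Finset.mem_erase.1 hd
    have := Nat.pos_of_mem_properDivisors hd
    exact ih d (Nat.mem_properDivisors.1 hd).2 (by omega)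
  have hrev := congrArg reverse hsplit
  rw [reverse_X_pow_sub_one n, reverse_mul_of_domain, hP, hsplit] at hrev
  refine mul_right_cancel₀ (b := ∏ d ∈ n.properDivisors, cyclotomic d R)
    (Finset.prod_ne_zero_iff.2 fun d _ => cyclotomic_ne_zero d R) ?_
  linear_combination hrev

end Cyclotomic

section Psi

variable {k m n p : ℕ}

lemma psi_eq_of_cyclotomic_mul_eq {f : ℤ[X]} (h : cyclotomic n ℤ * f = X ^ n - 1) :
    Psi n = f := by
  rw [Psi, ← h, mul_divByMonic_cancel_left _ (cyclotomic.monic n ℤ)]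

lemma cyclotomic_mul_psi (n : ℕ) : cyclotomic n ℤ * Psi n = X ^ n - 1 := by
  obtain ⟨f, hf⟩ := cyclotomic.dvd_X_pow_sub_one n ℤ
  rw [psi_eq_of_cyclotomic_mul_eq hf.symm, hf]

lemma natDegree_psi (hn : 0 < n) : (Psi n).natDegree = n - Nat.totient n := by
  have hψ : Psi n ≠ 0 := by
    intro h
    have := cyclotomic_mul_psi n
    rw [h, mul_zero, ← C_1] at this
    exact X_pow_sub_C_ne_zero hn 1 this.symm
  have h := congrArg natDegree (cyclotomic_mul_psi n)
  rw [natDegree_mul (cyclotomic_ne_zero n ℤ) hψ, natDegree_cyclotomic, ← C_1,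
    natDegree_X_pow_sub_C] at h
  omega

lemma psi_mul_prime_of_dvd (hp : p.Prime) (h : p ∣ m) : Psi (m * p) = expand ℤ p (Psi m) := by
  apply psi_eq_of_cyclotomic_mul_eq
  rw [← cyclotomic_expand_eq_cyclotomic hp h, ← map_mul, cyclotomic_mul_psi,
    expand_X_pow_sub_one]

lemma psi_mul_prime_of_not_dvd (hp : p.Prime) (h : ¬p ∣ m) :
    Psi (m * p) = expand ℤ p (Psi m) * cyclotomic m ℤ := by
  apply psi_eq_of_cyclotomic_mul_eq
  calc cyclotomic (m * p) ℤ * (expand ℤ p (Psi m) * cyclotomic m ℤ)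
      = expand ℤ p (cyclotomic m ℤ * Psi m) := by
        rw [map_mul, cyclotomic_expand_eq_cyclotomic_mul hp h]; ring
    _ = X ^ (m * p) - 1 := by rw [cyclotomic_mul_psi, expand_X_pow_sub_one]

lemma psi_coeff_one_of_not_squarefree (h : ¬Squarefree n) : (Psi n).coeff 1 = 0 := by
  obtain ⟨p, hp, c, rfl⟩ : ∃ p, p.Prime ∧ p * p ∣ n := by
    simpa [Nat.squarefree_iff_prime_squarefree, Nat.prime_iff] using h
  rw [mul_assoc, mul_comm, psi_mul_prime_of_dvd hp (dvd_mul_right p c), coeff_expand hp.pos,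
    if_neg hp.not_dvd_one]

lemma reverse_psi (hn : 1 < n) : (Psi n).reverse = -Psi n := by
  have hrev := congrArg reverse (cyclotomic_mul_psi n)
  rw [reverse_X_pow_sub_one n, reverse_mul_of_domain, reverse_cyclotomic hn,
    ← cyclotomic_mul_psi] at hrev
  exact mul_left_cancel₀ (cyclotomic_ne_zero n ℤ) (by linear_combination hrev)

lemma psi_coeff_half_eq_zero (hn : 2 < n) (he : Even n) :
    (Psi n).coeff ((n - Nat.totient n) / 2) = 0 := by
  rw [← natDegree_psi (by omega)]
  refine coeff_natDegree_div_two_eq_zero_of_reverse_eq_neg (reverse_psi (by omega)) ?_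
  rw [natDegree_psi (by omega), Nat.even_sub (Nat.totient_le n)]
  exact iff_of_true he (Nat.totient_even hn)

lemma modXPow_psi_mul_cyclotomic (hk : k ≤ n) :
    modXPow k (Psi n) * modXPow k (cyclotomic n ℤ) = -1 := by
  rw [← map_mul, mul_comm, cyclotomic_mul_psi, map_sub, modXPow_X_pow_of_le hk, map_one, zero_sub]

lemma modXPow_psi_eq_neg_of_mul_eq_one {f g : ℤ[X]} (hk : k ≤ n)
    (hf : modXPow k (cyclotomic n ℤ) = modXPow k f) (hfg : modXPow k (f * g) = 1) :
    modXPow k (Psi n) = modXPow k (-g) := by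
  have hψ := modXPow_psi_mul_cyclotomic hk
  rw [hf] at hψ
  rw [map_mul] at hfg
  rw [map_neg]
  linear_combination modXPow k g * hψ - modXPow k (Psi n) * hfg

lemma modXPow_psi_mul_prime_of_moebius_eq_one (hp : p.Prime) (hpm : p < m.minFac) (hm : 1 < m)
    (hsf : Squarefree m) (hμ : μ m = 1) :
    modXPow (p + 1) (Psi (m * p)) = modXPow (p + 1) (-((1 + X ^ p) * (1 - X))) := by
  have hpm' : ¬p ∣ m := fun h => (Nat.minFac_le_of_dvd hp.two_le h).not_gt hpm
  have h2 : 2 ≤ m.minFac := (Nat.minFac_prime hm.ne').two_le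
  have hψ : modXPow 2 (Psi m) = modXPow 2 (-(1 + X)) := by
    simpa [Finset.sum_range_succ] using modXPow_psi_eq_neg_of_mul_eq_one (k := 2) (by omega)
      (modXPow_cyclotomic_of_moebius_eq_one hm hsf h2 hμ) (modXPow_one_sub_X_mul_geom_sum 2)
  have hle : p + 1 ≤ p * 2 := by linarith [hp.two_le]
  rw [psi_mul_prime_of_not_dvd hp hpm', map_mul, modXPow_expand hψ hle,
    modXPow_cyclotomic_of_moebius_eq_one hm hsf hpm hμ, ← map_mul]
  congr 1
  simp only [map_neg, map_add, map_one, expand_X]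
  ring

lemma modXPow_psi_mul_prime_of_moebius_eq_neg_one (hp : p.Prime) (hpm : p < m.minFac)
    (hm : 1 < m) (hsf : Squarefree m) (hμ : μ m = -1) :
    modXPow (p + 1) (Psi (m * p)) =
      modXPow (p + 1) (-((1 - X ^ p) * ∑ i ∈ Finset.range (p + 1), X ^ i)) := by
  have hpm' : ¬p ∣ m := fun h => (Nat.minFac_le_of_dvd hp.two_le h).not_gt hpm
  have h2 : 2 ≤ m.minFac := (Nat.minFac_prime hm.ne').two_le
  have hψ : modXPow 2 (Psi m) = modXPow 2 (-(1 - X)) :=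
    modXPow_psi_eq_neg_of_mul_eq_one (k := 2) (by omega)
      (modXPow_cyclotomic_of_moebius_eq_neg_one hm hsf h2 hμ)
      (by rw [mul_comm, modXPow_one_sub_X_mul_geom_sum])
  have hle : p + 1 ≤ p * 2 := by linarith [hp.two_le]
  rw [psi_mul_prime_of_not_dvd hp hpm', map_mul, modXPow_expand hψ hle,
    modXPow_cyclotomic_of_moebius_eq_neg_one hm hsf hpm hμ, ← map_mul]
  congr 1
  simp only [map_neg, map_sub, map_one, expand_X]
  ring

lemma exists_psi_mul_prime_coeff_eq_zero (hp : p.Prime) (hp2 : p ≠ 2) (hpm : p < m.minFac)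
    (hm : 1 < m) (hsf : Squarefree m) : ∃ k ≤ p, (Psi (m * p)).coeff k = 0 := by
  have hp3 : 3 ≤ p := lt_of_le_of_ne hp.two_le hp2.symm
  rcases ArithmeticFunction.moebius_ne_zero_iff_eq_or.1
    (ArithmeticFunction.moebius_ne_zero_iff_squarefree.2 hsf) with hμ | hμ
  · refine ⟨2, hp.two_le, ?_⟩
    rw [coeff_eq_of_modXPow_eq (modXPow_psi_mul_prime_of_moebius_eq_one hp hpm hm hsf hμ)
      (by omega)]
    have h2p : 2 ≠ p := by omega
    have h2p' : 2 ≠ p + 1 := by omega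
    simp [add_mul, mul_sub, coeff_X, coeff_one, coeff_X_pow, ← pow_succ, h2p, h2p']
  · refine ⟨p, le_rfl, ?_⟩
    rw [coeff_eq_of_modXPow_eq (modXPow_psi_mul_prime_of_moebius_eq_neg_one hp hpm hm hsf hμ)
      (by omega)]
    simp [sub_mul, coeff_X_pow_mul', coeff_X_pow]

end Psi

lemma le_mul_prime_sub_totient {m p : ℕ} (hp : p.Prime) (h : ¬p ∣ m) :
    m ≤ m * p - Nat.totient (m * p) := by
  rw [Nat.totient_mul (hp.coprime_iff_not_dvd.2 h).symm, Nat.totient_prime hp]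
  have hφ : Nat.totient m * (p - 1) ≤ m * p - m := by
    rw [← Nat.mul_sub_one]; exact Nat.mul_le_mul_right _ (Nat.totient_le m)
  have : m ≤ m * p := Nat.le_mul_of_pos_right m hp.pos
  omega

theorem exists_psi_coeff_eq_zero_of_squarefree_of_not_even {n : ℕ} (hn : 1 < n) (hp : ¬n.Prime)
    (hodd : ¬Even n) (hsf : Squarefree n) : ∃ k ≤ n - Nat.totient n, (Psi n).coeff k = 0 := by
  set p := n.minFac
  have hpp : p.Prime := Nat.minFac_prime hn.ne'
  obtain ⟨m, hm⟩ : ∃ m, n = m * p := ⟨n / p, (Nat.div_mul_cancel (Nat.minFac_dvd n)).symm⟩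
  have hpm : ¬p ∣ m :=
    hpp.coprime_iff_not_dvd.1 (Nat.coprime_of_squarefree_mul (hm ▸ hsf)).symm
  have hp2 : p ≠ 2 := fun h => hodd (even_iff_two_dvd.2 (h ▸ Nat.minFac_dvd n))
  have hpm_le : p ≤ m := by
    have := Nat.minFac_le_div (by omega) hp
    rwa [show n / p = m by rw [hm, Nat.mul_div_cancel _ hpp.pos]] at this
  have hm1 : 1 < m := hpp.one_lt.trans_le hpm_le
  have hpmin : p < m.minFac := by
    refine lt_of_le_of_ne ?_ fun h => hpm (h ▸ Nat.minFac_dvd m)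
    exact Nat.minFac_le_of_dvd (Nat.minFac_prime hm1.ne').two_le
      ((Nat.minFac_dvd m).trans (hm ▸ dvd_mul_right m p))
  obtain ⟨k, hk, hcoeff⟩ := exists_psi_mul_prime_coeff_eq_zero hpp hp2 hpmin hm1
    (hsf.squarefree_of_dvd (hm ▸ dvd_mul_right m p))
  rw [hm]
  exact ⟨k, hk.trans (hpm_le.trans (le_mul_prime_sub_totient hpp hpm)), hcoeff⟩

theorem psi_has_zero_coeff (n : ℕ) (hn : 0 < n) (hn1 : n ≠ 1) (hp : ¬ n.Prime) :
    ∃ k ≤ n - Nat.totient n, (Psi n).coeff k = 0 := by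
  have h1n : 1 < n := by omega
  by_cases hsf : Squarefree n
  · by_cases he : Even n
    · have h2n : 2 < n := lt_of_le_of_ne h1n fun h => hp (h ▸ Nat.prime_two)
      exact ⟨_, Nat.div_le_self _ 2, psi_coeff_half_eq_zero h2n he⟩
    · exact exists_psi_coeff_eq_zero_of_squarefree_of_not_even h1n hp he hsf
  · exact ⟨1, by have := Nat.totient_lt n h1n; omega, psi_coeff_one_of_not_squarefree hsf⟩
end

section
/- Let p < q < r be distinct primes with r > (p-1)(q-1). Then Ψ_{pqr}(x) is flat, i.e., all coefficients of Ψ_{pqr}(x) lie in {-1, 0, 1}. -/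
/-!
Since `r ∤ pq`, `Ψ_{pqr}(x) = Φ_{pq}(x) Ψ_{pq}(x^r)`, and `deg Φ_{pq} = (p-1)(q-1) < r`, so
every coefficient of `Ψ_{pqr}` is a single product of a coefficient of `Φ_{pq}` and one of
`Ψ_{pq}`. Both factors are flat: `Ψ_{pq}(x) = Φ_p(x)(x^q - 1)` visibly, and `Φ_{pq}` because
below degree `pq` it agrees with the power series `(1 - x) ∑_{i,j} x^{pi+qj}`, and each `n < pq`
has at most one representation `n = pi + qj`.
-/

open Polynomial

namespace Polynomial

def IsFlat (f : ℤ[X]) : Prop := ∀ n, |f.coeff n| ≤ 1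

theorem coeff_mul_expand_of_natDegree_lt {R : Type*} [CommSemiring R] {f : R[X]} {r : ℕ}
    (hf : f.natDegree < r) (g : R[X]) (k : ℕ) :
    (f * expand R r g).coeff k = f.coeff (k % r) * g.coeff (k / r) := by
  have hr : 0 < r := by omega
  rw [coeff_mul, Finset.sum_eq_single_of_mem (k % r, r * (k / r))
    (Finset.HasAntidiagonal.mem_antidiagonal.2 (Nat.mod_add_div k r)), coeff_expand_mul' hr]
  rintro ⟨i, j⟩ hij hne
  rw [Finset.HasAntidiagonal.mem_antidiagonal] at hij
  by_cases hj : r ∣ j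
  · obtain ⟨m, rfl⟩ := hj
    have hi : r ≤ i := by
      by_contra! hi
      obtain ⟨rfl, rfl⟩ := (Nat.div_mod_unique hr).2 ⟨hij, hi⟩
      exact hne rfl
    rw [coeff_eq_zero_of_natDegree_lt (hf.trans_le hi), zero_mul]
  · rw [coeff_expand hr, if_neg hj, mul_zero]

theorem IsFlat.mul_expand {f g : ℤ[X]} {r : ℕ} (hf : f.IsFlat) (hg : g.IsFlat)
    (hdeg : f.natDegree < r) : (f * expand ℤ r g).IsFlat := fun k => by
  rw [coeff_mul_expand_of_natDegree_lt hdeg, abs_mul]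
  exact mul_le_one₀ (hf _) (abs_nonneg _) (hg _)

theorem isFlat_X_pow_mul_sub {f : ℤ[X]} (hf : ∀ n, f.coeff n ∈ Set.Icc 0 1) (q : ℕ) :
    (X ^ q * f - f).IsFlat := fun n => by
  rw [coeff_sub, coeff_X_pow_mul']
  have hshift : (if q ≤ n then f.coeff (n - q) else 0) ∈ Set.Icc 0 1 := by
    split_ifs
    exacts [hf _, ⟨le_rfl, zero_le_one⟩]
  exact abs_sub_le_of_nonneg_of_le hshift.1 hshift.2 (hf n).1 (hf n).2

theorem coeff_cyclotomic_prime_mem_Icc {p : ℕ} (hp : p.Prime) (n : ℕ) :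
    (cyclotomic p ℤ).coeff n ∈ Set.Icc 0 1 := by
  have := Fact.mk hp
  simp only [cyclotomic_prime, finsetSum_coeff, coeff_X_pow, Finset.sum_ite_eq,
    Finset.mem_range]
  split_ifs <;> simp

end Polynomial

theorem Psi_mul_cyclotomic (n : ℕ) : Psi n * cyclotomic n ℤ = X ^ n - 1 := by
  have hmod := (modByMonic_eq_zero_iff_dvd (cyclotomic.monic n ℤ)).2
    (cyclotomic.dvd_X_pow_sub_one n ℤ)
  have := modByMonic_add_div ((X : ℤ[X]) ^ n - 1) (cyclotomic n ℤ)
  rwa [hmod, zero_add, mul_comm] at this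

theorem Psi_eq_of_mul_cyclotomic {n : ℕ} {f : ℤ[X]} (h : f * cyclotomic n ℤ = X ^ n - 1) :
    Psi n = f := by
  rw [Psi, ← h, mul_comm, mul_divByMonic_cancel_left _ (cyclotomic.monic n ℤ)]

theorem Psi_prime {p : ℕ} (hp : p.Prime) : Psi p = X - 1 := by
  have := Fact.mk hp
  exact Psi_eq_of_mul_cyclotomic (by rw [mul_comm, cyclotomic_prime_mul_X_sub_one])

theorem Psi_mul_prime {n r : ℕ} (hr : r.Prime) (hn : ¬ r ∣ n) :
    Psi (n * r) = cyclotomic n ℤ * expand ℤ r (Psi n) := by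
  apply Psi_eq_of_mul_cyclotomic
  have := congrArg (expand ℤ r) (Psi_mul_cyclotomic n)
  rw [map_mul, cyclotomic_expand_eq_cyclotomic_mul hr hn, map_sub, map_pow, expand_X,
    map_one, ← pow_mul, mul_comm r] at this
  rw [← this]
  ring

open Finset in
theorem Nat.card_filter_antidiagonal_dvd_le_one {p q n : ℕ} (hpq : p.Coprime q) (hn : n < p * q) :
    #{x ∈ antidiagonal n | p ∣ x.1 ∧ q ∣ x.2} ≤ 1 := by
  refine card_le_one.2 fun ⟨i, j⟩ hij ⟨i', j'⟩ hij' => ?_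
  simp only [mem_filter, HasAntidiagonal.mem_antidiagonal] at hij hij'
  obtain ⟨hsum, hpi, hqj⟩ := hij
  obtain ⟨hsum', hpi', hqj'⟩ := hij'
  have hmodp : i ≡ i' [MOD p] :=
    (Nat.modEq_zero_iff_dvd.2 hpi).trans (Nat.modEq_zero_iff_dvd.2 hpi').symm
  have hmodq : i ≡ i' [MOD q] :=
    ((Nat.modEq_zero_iff_dvd.2 hqj).trans (Nat.modEq_zero_iff_dvd.2 hqj').symm).add_right_cancel
      (by rw [hsum, hsum'])
  have hi : i = i' := ((Nat.modEq_and_modEq_iff_modEq_mul hpq).1 ⟨hmodp, hmodq⟩).eq_of_lt_of_lt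
    (by omega) (by omega)
  ext <;> simp <;> omega

section PowerSeries

open PowerSeries Finset

variable {R : Type*} [CommRing R]

theorem PowerSeries.one_sub_X_pow_mul_expand_mk_one {p : ℕ} (hp : p ≠ 0) :
    (1 - X ^ p) * expand p hp (mk 1 : R⟦X⟧) = 1 := by
  simpa [mul_comm] using congrArg (expand p hp) (mk_one_mul_one_sub_eq_one R)

theorem PowerSeries.coeff_expand_mk_one_mul_expand_mk_one {p q : ℕ} (hp : p ≠ 0) (hq : q ≠ 0)
    (n : ℕ) : coeff n (expand p hp (mk 1 : R⟦X⟧) * expand q hq (mk 1 : R⟦X⟧)) =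
      #{x ∈ antidiagonal n | p ∣ x.1 ∧ q ∣ x.2} := by
  simp only [coeff_mul, coeff_expand, coeff_mk, Pi.one_apply, ite_zero_mul_ite_zero, mul_one]
  rw [sum_boole]

theorem PowerSeries.coeff_one_sub_X_pow_mul_of_lt {N n : ℕ} (hn : n < N) (F : R⟦X⟧) :
    coeff n ((1 - X ^ N) * F) = coeff n F := by
  rw [sub_mul, one_mul, map_sub, coeff_X_pow_mul', if_neg (by omega), sub_zero]

theorem PowerSeries.abs_coeff_one_sub_X_mul_le_one {F : ℤ⟦X⟧} {n : ℕ}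
    (hF : ∀ m ≤ n, coeff m F ∈ Set.Icc 0 1) : |coeff n ((1 - X) * F)| ≤ 1 := by
  rw [sub_mul, one_mul, map_sub]
  cases n with
  | zero => simpa using abs_le_abs_of_nonneg (hF 0 le_rfl).1 (hF 0 le_rfl).2
  | succ n =>
    rw [coeff_succ_X_mul]
    exact abs_sub_le_of_nonneg_of_le (hF _ le_rfl).1 (hF _ le_rfl).2 (hF n (by omega)).1
      (hF n (by omega)).2

end PowerSeries

section TwoPrimes

variable {p q : ℕ} (hp : p.Prime) (hq : q.Prime) (hpq : p ≠ q)
include hp hq hpq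

theorem Psi_prime_mul_prime : Psi (p * q) = cyclotomic p ℤ * (X ^ q - 1) := by
  rw [Psi_mul_prime hq ((Nat.prime_dvd_prime_iff_eq hq hp).not.2 hpq.symm), Psi_prime hp]
  simp

theorem isFlat_Psi_prime_mul_prime : (Psi (p * q)).IsFlat := by
  rw [Psi_prime_mul_prime hp hq hpq, mul_comm, sub_mul, one_mul]
  exact isFlat_X_pow_mul_sub (coeff_cyclotomic_prime_mem_Icc hp) q

theorem cyclotomic_prime_mul_prime_mul_X_pow_sub_one :
    cyclotomic (p * q) ℤ * (X ^ p - 1) * (X ^ q - 1) = (X ^ (p * q) - 1) * (X - 1) := by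
  have := Fact.mk hp
  have hPsi := Psi_mul_cyclotomic (p * q)
  rw [Psi_prime_mul_prime hp hq hpq] at hPsi
  linear_combination (X - 1) * hPsi - cyclotomic (p * q) ℤ * (X ^ q - 1) *
    cyclotomic_prime_mul_X_sub_one ℤ p

theorem coe_cyclotomic_prime_mul_prime :
    (cyclotomic (p * q) ℤ : PowerSeries ℤ) =
      (1 - PowerSeries.X ^ (p * q)) * ((1 - PowerSeries.X) *
        (PowerSeries.expand p hp.ne_zero (.mk 1) * PowerSeries.expand q hq.ne_zero (.mk 1))) := by
  have h := congrArg (coeToPowerSeries.ringHom (R := ℤ))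
    (cyclotomic_prime_mul_prime_mul_X_pow_sub_one hp hq hpq)
  simp only [map_mul, map_sub, map_pow, map_one, coeToPowerSeries.ringHom_apply, coe_X] at h
  set Sp : PowerSeries ℤ := PowerSeries.expand p hp.ne_zero (.mk 1)
  set Sq : PowerSeries ℤ := PowerSeries.expand q hq.ne_zero (.mk 1)
  set Φ : PowerSeries ℤ := ↑(cyclotomic (p * q) ℤ)
  linear_combination Sp * Sq * h -
    Φ * (1 - PowerSeries.X ^ q) * Sq *
      PowerSeries.one_sub_X_pow_mul_expand_mk_one (R := ℤ) hp.ne_zero -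
    Φ * PowerSeries.one_sub_X_pow_mul_expand_mk_one (R := ℤ) hq.ne_zero

theorem isFlat_cyclotomic_prime_mul_prime : (cyclotomic (p * q) ℤ).IsFlat := by
  intro n
  obtain hn | hn := lt_or_ge n (p * q)
  · rw [← coeff_coe, coe_cyclotomic_prime_mul_prime hp hq hpq,
      PowerSeries.coeff_one_sub_X_pow_mul_of_lt hn]
    refine PowerSeries.abs_coeff_one_sub_X_mul_le_one fun m hm => ?_
    rw [PowerSeries.coeff_expand_mk_one_mul_expand_mk_one]
    exact ⟨Nat.cast_nonneg _, Nat.cast_le_one.2 <| Nat.card_filter_antidiagonal_dvd_le_one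
      ((Nat.coprime_primes hp hq).2 hpq) (by omega)⟩
  · rw [coeff_eq_zero_of_natDegree_lt, abs_zero]
    · exact zero_le_one
    · rw [natDegree_cyclotomic]
      exact (Nat.totient_lt _ (by nlinarith [hp.two_le, hq.two_le])).trans_le hn

end TwoPrimes

theorem psi_three_primes_flat (p q r : ℕ) (hp : p.Prime) (hq : q.Prime) (hr : r.Prime)
    (hpq : p < q) (hqr : q < r) (hbig : r > (p - 1) * (q - 1)) (k : ℕ) :
    |(Psi (p * q * r)).coeff k| ≤ 1 := by
  have hr_ndvd : ¬ r ∣ p * q := fun h => by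
    rcases hr.dvd_mul.1 h with h | h
    · exact absurd (Nat.le_of_dvd hp.pos h) (by omega)
    · exact absurd (Nat.le_of_dvd hq.pos h) (by omega)
  have hdeg : (cyclotomic (p * q) ℤ).natDegree < r := by
    rwa [natDegree_cyclotomic, Nat.totient_mul ((Nat.coprime_primes hp hq).2 hpq.ne),
      Nat.totient_prime hp, Nat.totient_prime hq]
  rw [Psi_mul_prime hr hr_ndvd]
  exact (isFlat_cyclotomic_prime_mul_prime hp hq hpq.ne).mul_expand
    (isFlat_Psi_prime_mul_prime hp hq hpq.ne) hdeg k
end
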